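/- arXiv:2005.06206 — 3 statements merged into one kernel-verified Lean document; each statement's English description precedes it below -/
import Mathlib

section
/- Let E : ℝ≥0 → ℝ≥0 be a function and C₀, T > 0 constants such that for all t ≥ 0, ∫_t^∞ E(s) ds ≤ T·E(t) + C₀. Then for all t ≥ 0, ∫_t^∞ E(s) ds ≤ T·E(0)·exp(-t/T) + C₀. -/
/-!
Write `F t = ∫_t^∞ E` and `G = F - C₀`. Since `E ≥ 0`, `F` is antitone, so integrating the
hypothesis `G ≤ T E` over `[a, b]` gives `(b - a) G(b) ≤ T (G(a) - G(b))`, i.e.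
`G(b) ≤ T / (T + (b - a)) · G(a)`. Iterating this over `n` equal steps of `[0, t]` gives
`G(t) ≤ (1 + t / (T n))⁻ⁿ G(0)`, and letting `n → ∞` yields `G(t) ≤ exp (-t / T) G(0)`,
while `G(0) ≤ T E(0)` is the hypothesis at `t = 0`.
-/

open MeasureTheory Real Filter Topology Set

lemma tendsto_div_add_div_pow_atTop {T : ℝ} (hT : T ≠ 0) (t : ℝ) :
    Tendsto (fun n : ℕ => (T / (T + t / n)) ^ n) atTop (𝓝 (exp (-t / T))) := by
  have hdiv : ∀ n : ℕ, T / (T + t / n) = (1 + t / T / n)⁻¹ := fun n => by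
    have hfac : T + t / n = T * (1 + t / T / n) := by field_simp
    rw [hfac, div_mul_eq_div_div, div_self hT, one_div]
  simp only [hdiv, inv_pow, neg_div, exp_neg]
  exact (tendsto_one_add_div_pow_exp (t / T)).inv₀ (exp_ne_zero _)

section DiscreteGronwall

variable {g : ℝ → ℝ} {T : ℝ}

lemma le_pow_mul_of_mul_add_sub_le (hT : 0 < T)
    (hg : ∀ a b, 0 ≤ a → a ≤ b → g b * (T + (b - a)) ≤ T * g a) {h : ℝ} (hh : 0 ≤ h) (k : ℕ) :
    g (k * h) ≤ (T / (T + h)) ^ k * g 0 := by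
  induction k with
  | zero => simp
  | succ k ih =>
    have hstep : g ((k + 1 : ℕ) * h) ≤ T / (T + h) * g (k * h) := by
      rw [div_mul_eq_mul_div, le_div_iff₀ (by linarith)]
      simpa [add_mul] using hg (k * h) ((k + 1 : ℕ) * h) (by positivity) (by push_cast; nlinarith)
    calc g ((k + 1 : ℕ) * h) ≤ T / (T + h) * g (k * h) := hstep
      _ ≤ T / (T + h) * ((T / (T + h)) ^ k * g 0) := by gcongr
      _ = (T / (T + h)) ^ (k + 1) * g 0 := by ring

lemma le_exp_neg_div_mul_of_mul_add_sub_le (hT : 0 < T)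
    (hg : ∀ a b, 0 ≤ a → a ≤ b → g b * (T + (b - a)) ≤ T * g a) {t : ℝ} (ht : 0 ≤ t) :
    g t ≤ exp (-t / T) * g 0 := by
  refine ge_of_tendsto ((tendsto_div_add_div_pow_atTop hT.ne' t).mul_const (g 0)) ?_
  filter_upwards [eventually_ne_atTop 0] with n hn
  simpa [mul_div_cancel₀ t (Nat.cast_ne_zero.2 hn)] using
    le_pow_mul_of_mul_add_sub_le hT hg (div_nonneg ht n.cast_nonneg) n

end DiscreteGronwall

section TailIntegral

variable {E : ℝ → ℝ} {a : ℝ}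

lemma antitoneOn_setIntegral_Ici (hE : ∀ s, a ≤ s → 0 ≤ E s) (hint : IntegrableOn E (Ici a)) :
    AntitoneOn (fun t => ∫ s in Ici t, E s) (Ici a) := by
  intro x hx y _ hxy
  have hsub := intervalIntegral.integral_Ici_sub_Ici (hint.mono_set (Ici_subset_Ici.2 hx)) hxy
  have hnonneg : 0 ≤ ∫ s in Ico x y, E s :=
    setIntegral_nonneg measurableSet_Ico fun s hs => hE s (le_trans hx hs.1)
  simp only
  linarith

lemma setIntegral_Ici_sub_mul_add_sub_le {T C b : ℝ} (hE : ∀ s, a ≤ s → 0 ≤ E s)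
    (hint : IntegrableOn E (Ici a)) (hyp : ∀ s, a ≤ s → ∫ u in Ici s, E u ≤ T * E s + C)
    (hab : a ≤ b) :
    ((∫ s in Ici b, E s) - C) * (T + (b - a)) ≤ T * ((∫ s in Ici a, E s) - C) := by
  set F := fun t => ∫ s in Ici t, E s
  have hF : AntitoneOn F (Ici a) := antitoneOn_setIntegral_Ici hE hint
  have hFint : IntegrableOn F (Ico a b) :=
    ((hF.mono Icc_subset_Ici_self).integrableOn_isCompact isCompact_Icc).mono_set
      Ico_subset_Icc_self
  have hconst {c : ℝ} : IntegrableOn (fun _ => c) (Ico a b) :=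
    integrableOn_const measure_Ico_lt_top.ne
  have key : (F b - C) * (b - a) ≤ T * (F a - F b) :=
    calc (F b - C) * (b - a) = ∫ _ in Ico a b, (F b - C) := by simp [hab, mul_comm]
      _ ≤ ∫ s in Ico a b, (F s - C) :=
          setIntegral_mono_on hconst (hFint.sub hconst) measurableSet_Ico fun s hs =>
            sub_le_sub_right (hF hs.1 hab hs.2.le) C
      _ ≤ ∫ s in Ico a b, T * E s :=
          setIntegral_mono_on (hFint.sub hconst) ((hint.mono_set Ico_subset_Ici_self).const_mul T)
            measurableSet_Ico fun s hs => by linarith [hyp s hs.1]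
      _ = T * (F a - F b) := by
          rw [integral_const_mul, intervalIntegral.integral_Ici_sub_Ici hint hab]
  linear_combination key

end TailIntegral

theorem stmt_0_general (E : ℝ → ℝ) (T C₀ : ℝ) (hT : 0 < T)
    (hEnn : ∀ t, 0 ≤ t → 0 ≤ E t)
    (hEint : ∀ t, 0 ≤ t → IntegrableOn E (Set.Ici t))
    (hyp : ∀ t, 0 ≤ t → ∫ s in Set.Ici t, E s ≤ T * E t + C₀) :
    ∀ t, 0 ≤ t → ∫ s in Set.Ici t, E s ≤ T * E 0 * Real.exp (-t / T) + C₀ := by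
  intro t ht
  have hstep : ∀ a b, 0 ≤ a → a ≤ b →
      ((∫ s in Ici b, E s) - C₀) * (T + (b - a)) ≤ T * ((∫ s in Ici a, E s) - C₀) :=
    fun a b ha hab => setIntegral_Ici_sub_mul_add_sub_le (fun s hs => hEnn s (ha.trans hs))
      (hEint a ha) (fun s hs => hyp s (ha.trans hs)) hab
  have hdecay := le_exp_neg_div_mul_of_mul_add_sub_le
    (g := fun t => (∫ s in Ici t, E s) - C₀) hT hstep ht
  have hstart : (∫ s in Ici 0, E s) - C₀ ≤ T * E 0 := by linarith [hyp 0 le_rfl]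
  calc ∫ s in Ici t, E s ≤ exp (-t / T) * ((∫ s in Ici 0, E s) - C₀) + C₀ := by
        linarith [hdecay]
    _ ≤ T * E 0 * exp (-t / T) + C₀ := by nlinarith [exp_pos (-t / T)]

theorem stmt_0 (E : ℝ → ℝ) (T C₀ : ℝ) (hT : 0 < T) (hC₀ : 0 < C₀)
    (hEnn : ∀ t, 0 ≤ t → 0 ≤ E t)
    (hEint : ∀ t, 0 ≤ t → IntegrableOn E (Set.Ici t))
    (hyp : ∀ t, 0 ≤ t → ∫ s in Set.Ici t, E s ≤ T * E t + C₀) :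
    ∀ t, 0 ≤ t → ∫ s in Set.Ici t, E s ≤ T * E 0 * Real.exp (-t / T) + C₀ :=
  stmt_0_general E T C₀ hT hEnn hEint hyp
end

section
/- Let E : ℝ≥0 → ℝ≥0 be non-increasing and suppose for some C₀, T > 0 that ∫_t^∞ E(s) ds ≤ T·E(t) + C₀ for all t ≥ 0. Then E(t) ≤ E(0)·exp(1 - t/T) + C₀/T for all t ≥ 0. -/
/-!
Write `F t = ∫_t^∞ E`. Since `E` is non-increasing, `F s - F (s + h) ≥ h E (s + h)`, and the
hypothesis gives `T E (s + h) ≥ F (s + h) - C₀`; hence `G = F - C₀` obeys the implicit Euler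
inequality `(1 + h / T) G (s + h) ≤ G s`. Iterating it along `n` steps of length `t / n` and
letting `n → ∞` yields `G t ≤ G 0 e^{-t/T} ≤ T E 0 e^{-t/T}`. Finally, for `t ≥ T`,
`T E t ≤ F (t - T) - F t ≤ F (t - T)`, which is the claim; for `t < T` it is just `E t ≤ E 0`.
-/

open MeasureTheory Real Filter Set Topology

theorem AntitoneOn.sub_mul_le_intervalIntegral {f : ℝ → ℝ} {a b : ℝ}
    (hf : AntitoneOn f (Icc a b)) (hab : a ≤ b) : (b - a) * f b ≤ ∫ x in a..b, f x := by
  have hint : IntervalIntegrable f volume a b := by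
    apply AntitoneOn.intervalIntegrable
    rwa [uIcc_of_le hab]
  calc (b - a) * f b = ∫ _ in a..b, f b := by simp
    _ ≤ ∫ x in a..b, f x :=
      intervalIntegral.integral_mono_on hab intervalIntegrable_const hint
        fun x hx => hf hx (right_mem_Icc.2 hab) hx.2

theorem AntitoneOn.sub_mul_le_integral_Ici_sub {f : ℝ → ℝ} {a b c : ℝ} (hab : a ≤ b)
    (hbc : b ≤ c) (hf : AntitoneOn f (Ici a)) (hint : IntegrableOn f (Ici b)) :
    (c - b) * f c ≤ (∫ x in Ici b, f x) - ∫ x in Ici c, f x := by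
  rw [integral_Ici_eq_integral_Ioi, integral_Ici_eq_integral_Ioi,
    intervalIntegral.integral_Ioi_sub_Ioi (hint.mono_set Ioi_subset_Ici_self) hbc]
  exact (hf.mono (Icc_subset_Ici_iff hbc |>.2 hab)).sub_mul_le_intervalIntegral hbc

theorem le_div_one_add_mul_pow_of_one_add_mul_le {G : ℝ → ℝ} {a : ℝ} (ha : 0 ≤ a)
    (hG : ∀ s h, 0 ≤ s → 0 ≤ h → (1 + a * h) * G (s + h) ≤ G s) {h : ℝ} (hh : 0 ≤ h) :
    ∀ k : ℕ, G (k * h) ≤ G 0 / (1 + a * h) ^ k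
  | 0 => by simp
  | k + 1 => by
    have hpos : 0 < 1 + a * h := by positivity
    have hstep := hG (k * h) h (by positivity) hh
    rw [← add_one_mul, ← Nat.cast_succ] at hstep
    rw [pow_succ, ← div_div, le_div_iff₀' hpos]
    exact hstep.trans (le_div_one_add_mul_pow_of_one_add_mul_le ha hG hh k)

theorem le_mul_exp_neg_of_one_add_mul_le {G : ℝ → ℝ} {a : ℝ} (ha : 0 ≤ a)
    (hG : ∀ s h, 0 ≤ s → 0 ≤ h → (1 + a * h) * G (s + h) ≤ G s) {t : ℝ} (ht : 0 ≤ t) :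
    G t ≤ G 0 * exp (-(a * t)) := by
  have hpow : ∀ n : ℕ, 0 < n → G t ≤ G 0 / (1 + a * t / n) ^ n := by
    intro n hn
    have h := le_div_one_add_mul_pow_of_one_add_mul_le ha hG (div_nonneg ht n.cast_nonneg) n
    rwa [mul_div_cancel₀ t (by positivity), ← mul_div_assoc] at h
  have hlim : Tendsto (fun n : ℕ => G 0 / (1 + a * t / n) ^ n) atTop (𝓝 (G 0 / exp (a * t))) :=
    tendsto_const_nhds.div (tendsto_one_add_div_pow_exp (a * t)) (exp_ne_zero _)
  rw [exp_neg, ← div_eq_mul_inv]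
  exact ge_of_tendsto hlim (eventually_gt_atTop 0 |>.mono hpow)

theorem one_add_inv_mul_mul_integral_Ici_sub_le {E : ℝ → ℝ} {T C₀ : ℝ} (hT : 0 < T)
    (hEmono : AntitoneOn E (Ici 0)) (hEint : ∀ t, 0 ≤ t → IntegrableOn E (Ici t))
    (hyp : ∀ t, 0 ≤ t → ∫ s in Ici t, E s ≤ T * E t + C₀) {s h : ℝ} (hs : 0 ≤ s) (hh : 0 ≤ h) :
    (1 + T⁻¹ * h) * ((∫ x in Ici (s + h), E x) - C₀) ≤ (∫ x in Ici s, E x) - C₀ := by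
  have hlow := hEmono.sub_mul_le_integral_Ici_sub hs (le_add_of_nonneg_right hh) (hEint s hs)
  rw [add_sub_cancel_left] at hlow
  have hscaled : T⁻¹ * h * ((∫ x in Ici (s + h), E x) - C₀) ≤ h * E (s + h) :=
    calc T⁻¹ * h * ((∫ x in Ici (s + h), E x) - C₀) ≤ T⁻¹ * h * (T * E (s + h)) := by
          gcongr
          linarith [hyp (s + h) (by positivity)]
      _ = h * E (s + h) := by field_simp
  linarith

theorem stmt_1 (E : ℝ → ℝ) (T C₀ : ℝ) (hT : 0 < T) (hC₀ : 0 < C₀)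
    (hEnn : ∀ t, 0 ≤ t → 0 ≤ E t)
    (hEmono : AntitoneOn E (Set.Ici (0 : ℝ)))
    (hEint : ∀ t, 0 ≤ t → IntegrableOn E (Set.Ici t))
    (hyp : ∀ t, 0 ≤ t → ∫ s in Set.Ici t, E s ≤ T * E t + C₀) :
    ∀ t, 0 ≤ t → E t ≤ E 0 * Real.exp (1 - t / T) + C₀ / T := by
  intro t ht
  rcases lt_or_ge t T with htT | hTt
  · have hEt : E t ≤ E 0 := hEmono (mem_Ici.2 le_rfl) ht ht
    have hexp_ge : 1 ≤ exp (1 - t / T) := one_le_exp (by rw [sub_nonneg, div_le_one hT]; exact htT.le)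
    linarith [le_mul_of_one_le_right (hEnn 0 le_rfl) hexp_ge, div_pos hC₀ hT]
  · have hs : 0 ≤ t - T := sub_nonneg.2 hTt
    have hdecay := le_mul_exp_neg_of_one_add_mul_le (G := fun t => (∫ x in Ici t, E x) - C₀)
      (inv_nonneg.2 hT.le)
      (fun s h hs hh => one_add_inv_mul_mul_integral_Ici_sub_le hT hEmono hEint hyp hs hh) hs
    have hexp : -(T⁻¹ * (t - T)) = 1 - t / T := by field_simp; ring
    rw [hexp] at hdecay
    have hG0 : (∫ x in Ici 0, E x) - C₀ ≤ T * E 0 := by linarith [hyp 0 le_rfl]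
    have hlow := hEmono.sub_mul_le_integral_Ici_sub hs (sub_le_self t hT.le) (hEint _ hs)
    rw [sub_sub_cancel] at hlow
    have htail : 0 ≤ ∫ x in Ici t, E x :=
      setIntegral_nonneg measurableSet_Ici fun x hx => hEnn x (ht.trans hx)
    have hbound : T * E t ≤ T * (E 0 * exp (1 - t / T) + C₀ / T) := by
      rw [mul_add, mul_div_cancel₀ _ hT.ne', ← mul_assoc]
      linarith [mul_le_mul_of_nonneg_right hG0 (exp_pos (1 - t / T)).le]
    exact le_of_mul_le_mul_left hbound hT
end

section
/- Let a, b, M ≥ 0, 0 ≤ α₁, α₂ < 1, and C̃ > 0, and suppose M ≤ a + C̃·max(M^{α₁}, M^{α₂}). Then M ≤ max(2a, (2C̃)^{1/(1-α)}) where α = max(α₁,α₂) if 2C̃ ≥ 1 and α = min(α₁,α₂) if 2C̃ < 1. -/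
open Real

lemma stmt_3_aux (C α β M : ℝ) (hC : 0 < C) (hα : 0 ≤ α) (hα' : α < 1)
    (hβ' : β < 1) (hM : 0 < M) (h : M ≤ 2 * C * M ^ α)
    (hcmp : if 1 ≤ 2 * C then α ≤ β else β ≤ α) :
    M ≤ (2 * C) ^ (1 / (1 - β)) := by
  have h2C : 0 < 2 * C := by linarith
  have h1α : 0 < 1 - α := by linarith
  have h1β : 0 < 1 - β := by linarith
  have key : M ^ (1 - α) ≤ 2 * C := by
    have hpos : 0 < M ^ α := Real.rpow_pos_of_pos hM α
    have : M ^ (1 - α) * M ^ α ≤ 2 * C * M ^ α := by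
      rw [← Real.rpow_add hM]
      simpa using h
    exact le_of_mul_le_mul_right this hpos
  have hMle : M ≤ (2 * C) ^ (1 / (1 - α)) := by
    have := Real.rpow_le_rpow (Real.rpow_nonneg hM.le _) key (by positivity : (0:ℝ) ≤ 1 / (1 - α))
    rwa [← Real.rpow_mul hM.le, mul_one_div, div_self h1α.ne', Real.rpow_one] at this
  refine hMle.trans ?_
  by_cases h1 : 1 ≤ 2 * C
  · rw [if_pos h1] at hcmp
    exact Real.rpow_le_rpow_of_exponent_le h1
      (one_div_le_one_div_of_le h1β (by linarith))
  · rw [if_neg h1] at hcmp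
    exact Real.rpow_le_rpow_of_exponent_ge h2C (le_of_not_ge h1)
      (one_div_le_one_div_of_le h1α (by linarith))

theorem stmt_3 (a M C α₁ α₂ : ℝ) (ha : 0 ≤ a) (hM : 0 ≤ M) (hC : 0 < C)
    (hα₁ : 0 ≤ α₁) (hα₁' : α₁ < 1) (hα₂ : 0 ≤ α₂) (hα₂' : α₂ < 1)
    (hyp : M ≤ a + C * max (M ^ α₁) (M ^ α₂)) :
    M ≤ max (2 * a)
      ((2 * C) ^ (1 / (1 - (if 1 ≤ 2 * C then max α₁ α₂ else min α₁ α₂)))) := by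
  set β := (if 1 ≤ 2 * C then max α₁ α₂ else min α₁ α₂) with hβdef
  have hβ' : β < 1 := by
    rw [hβdef]; split
    · exact max_lt hα₁' hα₂'
    · exact lt_of_le_of_lt (min_le_left _ _) hα₁'
  rcases le_or_gt M (2 * a) with h | h
  · exact le_trans h (le_max_left _ _)
  · rcases hM.eq_or_lt with hM0 | hM0
    · refine le_trans ?_ (le_max_right _ _)
      rw [← hM0]
      exact (Real.rpow_pos_of_pos (by linarith) _).le
    · have hstep : M ≤ 2 * C * max (M ^ α₁) (M ^ α₂) := by linarith
      refine le_trans ?_ (le_max_right _ _)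
      rcases max_choice (M ^ α₁) (M ^ α₂) with hmax | hmax <;> rw [hmax] at hstep
      · refine stmt_3_aux C α₁ β M hC hα₁ hα₁' hβ' hM0 hstep ?_
        rw [hβdef]; split <;> simp [le_max_left, min_le_left]
      · refine stmt_3_aux C α₂ β M hC hα₂ hα₂' hβ' hM0 hstep ?_
        rw [hβdef]; split <;> simp [le_max_right, min_le_right]
end
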